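/- arXiv:2303.15766 — 2 statements merged into one kernel-verified Lean document; each statement's English description precedes it below -/
import Mathlib

section
/- Let d ≥ 1 and 0 < α < 2, set a = 2^{1 - 1/α}, and let Φ(z) = Σ_{i=1}^d (2 - 2 cos z_i). Then for all z ∈ [-π,π]^d with Euclidean norm |z| ≤ a, one has Φ(z)^{α/2} ≥ |z|^α (1 - (1/12)^{α/2} |z|^α). -/
/-!
From the quartic Taylor bound `cos x ≤ 1 - x²/2 + x⁴/24` and `∑ zᵢ⁴ ≤ (∑ zᵢ²)²` one gets
`Φ(z) ≥ |z|² - |z|⁴/12`. Raising this to the power `α/2 ∈ (0, 1)` and using the subadditivity of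
`t ↦ t^(α/2)`, in the form `a^p - b^p ≤ (a - b)^p`, gives
`Φ(z)^(α/2) ≥ |z|^α - (|z|⁴/12)^(α/2)`, which is the claim.
-/

open Real

namespace Real

lemma sq_sub_pow_four_div_three_le_sin_sq (x : ℝ) : x ^ 2 - x ^ 4 / 3 ≤ sin x ^ 2 := by
  wlog hx : 0 ≤ x generalizing x
  · simpa [Even.neg_pow (by decide : Even 4)] using this (-x) (by linarith)
  rcases le_or_gt (x ^ 2) 3 with hx3 | hx3
  · have hcube : 0 ≤ x - x ^ 3 / 6 := by nlinarith
    nlinarith [pow_le_pow_left₀ hcube (sin_ge_sub_cube hx) 2, sq_nonneg (x ^ 3)]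
  · nlinarith [sq_nonneg (sin x)]

lemma cos_le_one_sub_sq_div_two_add_pow_four_div (x : ℝ) :
    cos x ≤ 1 - x ^ 2 / 2 + x ^ 4 / 24 := by
  have hsin := sq_sub_pow_four_div_three_le_sin_sq (x / 2)
  rw [sin_sq_eq_half_sub, mul_div_cancel₀ x two_ne_zero] at hsin
  linarith

lemma rpow_sub_rpow_le_of_sub_le {a b c p : ℝ} (ha : 0 ≤ a) (hb : 0 ≤ b) (hc : 0 ≤ c)
    (habc : a - b ≤ c) (hp0 : 0 ≤ p) (hp1 : p ≤ 1) : a ^ p - b ^ p ≤ c ^ p := by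
  rcases le_or_gt b a with hba | hab
  · have hsub := rpow_add_le_add_rpow (sub_nonneg.2 hba) hb hp0 hp1
    rw [sub_add_cancel] at hsub
    linarith [rpow_le_rpow (sub_nonneg.2 hba) habc hp0]
  · linarith [rpow_le_rpow ha hab.le hp0, rpow_nonneg hc p]

end Real

noncomputable def latticeSymbol {ι : Type*} [Fintype ι] (z : EuclideanSpace ℝ ι) : ℝ :=
  ∑ i, (2 - 2 * cos (z i))

section latticeSymbol

variable {ι : Type*} [Fintype ι]

lemma latticeSymbol_nonneg (z : EuclideanSpace ℝ ι) : 0 ≤ latticeSymbol z :=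
  Finset.sum_nonneg fun i _ => by linarith [cos_le_one (z i)]

lemma sq_norm_sub_pow_four_div_le_latticeSymbol (z : EuclideanSpace ℝ ι) :
    ‖z‖ ^ 2 - ‖z‖ ^ 4 / 12 ≤ latticeSymbol z := by
  have hquartic : ∑ i, z i ^ 4 ≤ ‖z‖ ^ 4 := by
    calc ∑ i, z i ^ 4 = ∑ i, (z i ^ 2) ^ 2 := by simp only [← pow_mul]
      _ ≤ (∑ i, z i ^ 2) ^ 2 :=
        Finset.sum_sq_le_sq_sum_of_nonneg fun i _ => sq_nonneg (z i)
      _ = ‖z‖ ^ 4 := by rw [← EuclideanSpace.real_norm_sq_eq, ← pow_mul]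
  calc ‖z‖ ^ 2 - ‖z‖ ^ 4 / 12 ≤ ∑ i, z i ^ 2 - ∑ i, z i ^ 4 / 12 := by
        rw [← EuclideanSpace.real_norm_sq_eq, ← Finset.sum_div]
        linarith
    _ = ∑ i, (z i ^ 2 - z i ^ 4 / 12) := Finset.sum_sub_distrib _ _ |>.symm
    _ ≤ latticeSymbol z := Finset.sum_le_sum fun i _ => by
        linarith [cos_le_one_sub_sq_div_two_add_pow_four_div (z i)]

end latticeSymbol

theorem symbol_lower_bound_general (d : ℕ) (α : ℝ) (hα0 : 0 < α) (hα2 : α < 2)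
    (z : EuclideanSpace ℝ (Fin d)) :
    (∑ i, (2 - 2 * Real.cos (z i))) ^ (α / 2) ≥
      ‖z‖ ^ α * (1 - (1 / 12 : ℝ) ^ (α / 2) * ‖z‖ ^ α) := by
  have hnorm := norm_nonneg z
  have hsq : (‖z‖ ^ 2) ^ (α / 2) = ‖z‖ ^ α := by
    rw [← rpow_natCast, ← rpow_mul hnorm]
    norm_num [mul_div_cancel₀ α two_ne_zero]
  have hquartic : (‖z‖ ^ 4 / 12) ^ (α / 2) = (1 / 12) ^ (α / 2) * (‖z‖ ^ α) ^ 2 := by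
    rw [show ‖z‖ ^ 4 / 12 = 1 / 12 * (‖z‖ ^ 2) ^ 2 by ring,
      mul_rpow (by norm_num) (by positivity), ← rpow_pow_comm (by positivity), hsq]
  calc ‖z‖ ^ α * (1 - (1 / 12 : ℝ) ^ (α / 2) * ‖z‖ ^ α)
      = (‖z‖ ^ 2) ^ (α / 2) - (‖z‖ ^ 4 / 12) ^ (α / 2) := by rw [hsq, hquartic]; ring
    _ ≤ latticeSymbol z ^ (α / 2) :=
      rpow_sub_rpow_le_of_sub_le (by positivity) (by positivity) (latticeSymbol_nonneg z)
        (by linarith [sq_norm_sub_pow_four_div_le_latticeSymbol z]) (by positivity)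
        (by linarith)

theorem symbol_lower_bound (d : ℕ) (hd : 1 ≤ d) (α : ℝ) (hα0 : 0 < α) (hα2 : α < 2)
    (z : EuclideanSpace ℝ (Fin d)) (hz : ∀ i, z i ∈ Set.Icc (-π) π)
    (hza : ‖z‖ ≤ 2 ^ (1 - 1 / α)) :
    (∑ i, (2 - 2 * Real.cos (z i))) ^ (α / 2) ≥
      ‖z‖ ^ α * (1 - (1 / 12 : ℝ) ^ (α / 2) * ‖z‖ ^ α) :=
  symbol_lower_bound_general d α hα0 hα2 z
end

section
/- Under the setting of the Dirichlet fractional Laplacian L on a finite subset G_1 of a connected graph with symmetric positive jump kernel Q_α (with Q_α(x,y) > 0 for all x ≠ y and summable rows), every eigenfunction φ_1 corresponding to the smallest eigenvalue λ_1 of L has constant sign; moreover λ_1 is a simple eigenvalue. -/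
/-! The matrix `A` of `L` on `G₁` is symmetric with negative off-diagonal entries. As `λ₁` is the
bottom of the spectrum, `λ₁ ‖v‖² ≤ ⟪A v, v⟫` for all `v`. Replacing an eigenvector `φ` of `λ₁` by
`|φ|` keeps `‖φ‖` but strictly lowers `⟪A φ, φ⟫` if `φ` changes sign, which is impossible; and a
nonnegative eigenvector has no zero `x`, since there `(A φ) x = ∑_{y ≠ x} A x y φ y < 0`.
Simplicity follows: a combination of two ground states vanishing at one point is not of one
strict sign, hence zero. -/

theorem abs_dotProduct_abs {ι : Type*} [Fintype ι] (v : ι → ℝ) : |v| ⬝ᵥ |v| = v ⬝ᵥ v :=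
  Finset.sum_congr rfl fun i _ => abs_mul_abs_self (v i)

namespace Matrix

variable {ι : Type*} [Fintype ι] {A : Matrix ι ι ℝ}

theorem IsHermitian.mul_dotProduct_self_le_of_forall_le_eigenvalue [DecidableEq ι]
    (hA : A.IsHermitian) {lam : ℝ}
    (hlam : ∀ μ (v : ι → ℝ), v ≠ 0 → A *ᵥ v = μ • v → lam ≤ μ) (v : ι → ℝ) :
    lam * (v ⬝ᵥ v) ≤ v ⬝ᵥ (A *ᵥ v) := by
  have hB : (A - lam • 1).IsHermitian := hA.sub (isHermitian_one.smul (.all lam))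
  -- every eigenvalue of `A - lam • 1` is `μ - lam` for an eigenvalue `μ` of `A`
  have hpsd : (A - lam • 1).PosSemidef := by
    refine hB.posSemidef_iff_eigenvalues_nonneg.mpr fun i => ?_
    have hne : ⇑(hB.eigenvectorBasis i) ≠ 0 := by
      simpa using hB.eigenvectorBasis.orthonormal.ne_zero i
    have := hlam _ _ hne (by
      have h := hB.mulVec_eigenvectorBasis i
      rw [sub_mulVec, smul_mulVec, one_mulVec, sub_eq_iff_eq_add] at h
      rw [h, add_smul])
    simpa using this
  have := hpsd.dotProduct_mulVec_nonneg v
  simp only [star_trivial, sub_mulVec, smul_mulVec, one_mulVec, dotProduct_sub,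
    dotProduct_smul, smul_eq_mul] at this
  linarith

theorem abs_dotProduct_mulVec_abs_lt (hoff : ∀ i j, i ≠ j → A i j < 0) {v : ι → ℝ} {p n : ι}
    (hp : 0 < v p) (hn : v n < 0) : |v| ⬝ᵥ (A *ᵥ |v|) < v ⬝ᵥ (A *ᵥ v) := by
  have hterm : ∀ i j, |v i| * (A i j * |v j|) ≤ v i * (A i j * v j) := by
    intro i j
    rcases eq_or_ne i j with rfl | hij
    · linear_combination A i i * abs_mul_abs_self (v i)
    · have := mul_le_mul_of_nonpos_left ((le_abs_self (v i * v j)).trans (abs_mul _ _).le)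
        (hoff i j hij).le
      linear_combination this
  have hpn : |v p| * (A p n * |v n|) < v p * (A p n * v n) := by
    have := mul_lt_mul_of_neg_left (show v p * v n < |v p| * |v n| by
      rw [abs_of_pos hp, abs_of_neg hn]; nlinarith) (hoff p n (by rintro rfl; linarith))
    linear_combination this
  simp only [dotProduct, mulVec, Finset.mul_sum, Pi.abs_apply]
  exact Finset.sum_lt_sum (fun i _ => Finset.sum_le_sum fun j _ => hterm i j)
    ⟨p, Finset.mem_univ _, Finset.sum_lt_sum (fun j _ => hterm p j) ⟨n, Finset.mem_univ _, hpn⟩⟩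

theorem pos_of_nonneg_of_mulVec_eq_smul (hoff : ∀ i j, i ≠ j → A i j < 0) {μ : ℝ}
    {v : ι → ℝ} (hv : A *ᵥ v = μ • v) (hv0 : v ≠ 0) (hnn : 0 ≤ v) (i : ι) : 0 < v i := by
  refine (hnn i).lt_of_ne' fun hvi => ?_
  obtain ⟨k, hk⟩ : ∃ k, v k ≠ 0 := Function.ne_iff.mp hv0
  have hki : k ≠ i := by rintro rfl; exact hk hvi
  have hsum : (A *ᵥ v) i < 0 := by
    refine Finset.sum_neg' (fun j _ => ?_) ⟨k, Finset.mem_univ _, ?_⟩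
    · rcases eq_or_ne i j with rfl | hij
      · simp [hvi]
      · exact mul_nonpos_of_nonpos_of_nonneg (hoff i j hij).le (hnn j)
    · exact mul_neg_of_neg_of_pos (hoff i k hki.symm) ((hnn k).lt_of_ne' hk)
  simp [hv, hvi] at hsum

theorem IsHermitian.nonneg_or_nonpos_of_mulVec_eq_smul [DecidableEq ι] (hA : A.IsHermitian)
    (hoff : ∀ i j, i ≠ j → A i j < 0) {lam : ℝ}
    (hlam : ∀ μ (v : ι → ℝ), v ≠ 0 → A *ᵥ v = μ • v → lam ≤ μ) {v : ι → ℝ}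
    (hv : A *ᵥ v = lam • v) : 0 ≤ v ∨ v ≤ 0 := by
  by_contra! hsign
  obtain ⟨⟨n, hn⟩, ⟨p, hp⟩⟩ : (∃ n, v n < 0) ∧ ∃ p, 0 < v p := by
    simpa [Pi.le_def] using hsign
  have := calc
    lam * (|v| ⬝ᵥ |v|) ≤ |v| ⬝ᵥ (A *ᵥ |v|) :=
      hA.mul_dotProduct_self_le_of_forall_le_eigenvalue hlam |v|
    _ < v ⬝ᵥ (A *ᵥ v) := abs_dotProduct_mulVec_abs_lt hoff hp hn
    _ = lam * (|v| ⬝ᵥ |v|) := by rw [hv, dotProduct_smul, smul_eq_mul, abs_dotProduct_abs]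
  exact this.false

theorem IsHermitian.pos_or_neg_of_mulVec_eq_smul [DecidableEq ι] (hA : A.IsHermitian)
    (hoff : ∀ i j, i ≠ j → A i j < 0) {lam : ℝ}
    (hlam : ∀ μ (v : ι → ℝ), v ≠ 0 → A *ᵥ v = μ • v → lam ≤ μ) {v : ι → ℝ}
    (hv : A *ᵥ v = lam • v) (hv0 : v ≠ 0) : (∀ i, 0 < v i) ∨ (∀ i, v i < 0) := by
  refine (hA.nonneg_or_nonpos_of_mulVec_eq_smul hoff hlam hv).imp
    (pos_of_nonneg_of_mulVec_eq_smul hoff hv hv0) fun hnp i => ?_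
  have := pos_of_nonneg_of_mulVec_eq_smul hoff (v := -v) (by rw [mulVec_neg, hv, smul_neg])
    (neg_ne_zero.mpr hv0) (neg_nonneg.mpr hnp) i
  simpa using this

theorem IsHermitian.exists_eq_smul_of_mulVec_eq_smul [DecidableEq ι] (hA : A.IsHermitian)
    (hoff : ∀ i j, i ≠ j → A i j < 0) {lam : ℝ}
    (hlam : ∀ μ (v : ι → ℝ), v ≠ 0 → A *ᵥ v = μ • v → lam ≤ μ) {v w : ι → ℝ}
    (hv : A *ᵥ v = lam • v) (hv0 : v ≠ 0) (hw : A *ᵥ w = lam • w) : ∃ c : ℝ, w = c • v := by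
  obtain ⟨k, hk⟩ : ∃ k, v k ≠ 0 := Function.ne_iff.mp hv0
  refine ⟨w k / v k, ?_⟩
  set η := w - (w k / v k) • v
  have hη : A *ᵥ η = lam • η := by
    simp only [η, mulVec_sub, mulVec_smul, hv, hw, smul_sub, smul_comm lam]
  have hηk : η k = 0 := by
    simp [η, div_mul_cancel₀ _ hk]
  by_contra hne
  rcases hA.pos_or_neg_of_mulVec_eq_smul hoff hlam hη (sub_ne_zero.mpr hne) with h | h
  · exact (h k).ne' hηk
  · exact (h k).ne hηk

end Matrix

section DirichletLaplacian

open Matrix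

variable {V : Type*} [DecidableEq V]

noncomputable def dirichletLaplacian (Q : V → V → ℝ) (G₁ : Finset V) (u : V → ℝ) (x : V) : ℝ :=
  ∑' y, Q x y * ((if x ∈ G₁ then u x else 0) - (if y ∈ G₁ then u y else 0))

noncomputable def dirichletMatrix (Q : V → V → ℝ) (G₁ : Finset V) : Matrix G₁ G₁ ℝ :=
  diagonal (fun x : G₁ => ∑' y, Q x y) - of fun x y : G₁ => Q x y

theorem dirichletMatrix_isHermitian {Q : V → V → ℝ} (hQsym : ∀ x y, Q x y = Q y x)
    (G₁ : Finset V) : (dirichletMatrix Q G₁).IsHermitian :=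
  (isHermitian_diagonal _).sub <| IsHermitian.ext fun x y => by simp [hQsym (x : V)]

theorem dirichletMatrix_apply_neg {Q : V → V → ℝ} (hQpos : ∀ x y, x ≠ y → 0 < Q x y)
    (G₁ : Finset V) {x y : G₁} (hxy : x ≠ y) : dirichletMatrix Q G₁ x y < 0 := by
  simpa [dirichletMatrix, diagonal_apply_ne _ hxy] using
    hQpos x y (Subtype.coe_injective.ne hxy)

theorem dirichletLaplacian_eq_mulVec {Q : V → V → ℝ} (hQsum : ∀ x, Summable (Q x))
    (G₁ : Finset V) (u : V → ℝ) {x : V} (hx : x ∈ G₁) :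
    dirichletLaplacian Q G₁ u x = (dirichletMatrix Q G₁ *ᵥ fun y : G₁ => u y) ⟨x, hx⟩ := by
  have hfin : ∑' y, Q x y * (if y ∈ G₁ then u y else 0) = ∑ y : G₁, Q x y * u y := by
    rw [tsum_eq_sum (s := G₁) fun y hy => by simp [hy], ← Finset.sum_coe_sort G₁]
    exact Finset.sum_congr rfl fun y _ => by rw [if_pos y.2]
  simp only [dirichletLaplacian, if_pos hx, mul_sub]
  rw [((hQsum x).mul_right _).tsum_sub (summable_of_ne_finset_zero (s := G₁) fun y hy => by
    simp [hy]), tsum_mul_right, hfin, dirichletMatrix, sub_mulVec, Pi.sub_apply, mulVec_diagonal]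
  rfl

theorem dirichletLaplacian_eigen_iff {Q : V → V → ℝ} (hQsum : ∀ x, Summable (Q x))
    {G₁ : Finset V} {u : V → ℝ} {μ : ℝ} :
    (∀ x ∈ G₁, dirichletLaplacian Q G₁ u x = μ * u x) ↔
      dirichletMatrix Q G₁ *ᵥ (fun y : G₁ => u y) = μ • fun y : G₁ => u y := by
  simp only [funext_iff, Subtype.forall, Pi.smul_apply, smul_eq_mul,
    ← dirichletLaplacian_eq_mulVec hQsum]

theorem dirichletMatrix_forall_le_eigenvalue {Q : V → V → ℝ} (hQsum : ∀ x, Summable (Q x))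
    {G₁ : Finset V} {lam : ℝ}
    (hmin : ∀ μ : ℝ, (∃ φ : V → ℝ, (∀ x ∉ G₁, φ x = 0) ∧ (∃ x ∈ G₁, φ x ≠ 0) ∧
      ∀ x ∈ G₁, dirichletLaplacian Q G₁ φ x = μ * φ x) → lam ≤ μ)
    (μ : ℝ) (v : G₁ → ℝ) (hv0 : v ≠ 0) (hv : dirichletMatrix Q G₁ *ᵥ v = μ • v) : lam ≤ μ := by
  let φ : V → ℝ := fun x => if h : x ∈ G₁ then v ⟨x, h⟩ else 0
  have hφv : (fun y : G₁ => φ y) = v := funext fun y => dif_pos y.2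
  obtain ⟨k, hk⟩ : ∃ k, v k ≠ 0 := Function.ne_iff.mp hv0
  refine hmin μ ⟨φ, fun x hx => dif_neg hx, ⟨k, k.2, by simpa [φ] using hk⟩, ?_⟩
  rwa [dirichletLaplacian_eigen_iff hQsum, hφv]

end DirichletLaplacian

theorem ground_state_positive_and_simple_general
    {V : Type*} [DecidableEq V]
    (Q : V → V → ℝ)
    (hQsym : ∀ x y, Q x y = Q y x)
    (hQpos : ∀ x y, x ≠ y → 0 < Q x y)
    (hQsum : ∀ x, Summable fun y => Q x y)
    (G₁ : Finset V)
    -- the Dirichlet fractional Laplacian acting on real functions supported in G₁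
    (L : (V → ℝ) → V → ℝ)
    (hL : ∀ u x, L u x = ∑' y, Q x y *
      ((if x ∈ G₁ then u x else 0) - (if y ∈ G₁ then u y else 0)))
    (lam₁ : ℝ)
    -- ... and it is the smallest one
    (hmin : ∀ μ : ℝ, (∃ φ : V → ℝ, (∀ x ∉ G₁, φ x = 0) ∧ (∃ x ∈ G₁, φ x ≠ 0) ∧
      ∀ x ∈ G₁, L φ x = μ * φ x) → lam₁ ≤ μ) :
    (∀ φ : V → ℝ, (∀ x ∉ G₁, φ x = 0) → (∃ x ∈ G₁, φ x ≠ 0) →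
      (∀ x ∈ G₁, L φ x = lam₁ * φ x) →
      (∀ x ∈ G₁, 0 < φ x) ∨ (∀ x ∈ G₁, φ x < 0)) ∧
    (∀ φ ψ : V → ℝ, (∀ x ∉ G₁, φ x = 0) → (∃ x ∈ G₁, φ x ≠ 0) →
      (∀ x ∈ G₁, L φ x = lam₁ * φ x) →
      (∀ x ∉ G₁, ψ x = 0) → (∀ x ∈ G₁, L ψ x = lam₁ * ψ x) →
      ∃ c : ℝ, ∀ x, ψ x = c * φ x) := by
  obtain rfl : L = dirichletLaplacian Q G₁ := funext fun u => funext (hL u)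
  have hA := dirichletMatrix_isHermitian hQsym G₁
  have hoff : ∀ x y : G₁, x ≠ y → dirichletMatrix Q G₁ x y < 0 :=
    fun _ _ => dirichletMatrix_apply_neg hQpos G₁
  have hlam := dirichletMatrix_forall_le_eigenvalue hQsum hmin
  have restrict_ne_zero {φ : V → ℝ} (h : ∃ x ∈ G₁, φ x ≠ 0) : (fun y : G₁ => φ y) ≠ 0 := by
    obtain ⟨x, hx, hφx⟩ := h
    exact Function.ne_iff.mpr ⟨⟨x, hx⟩, hφx⟩
  refine ⟨fun φ _ hφ0 hφ => ?_, fun φ ψ hφsupp hφ0 hφ hψsupp hψ => ?_⟩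
  · rcases hA.pos_or_neg_of_mulVec_eq_smul hoff hlam ((dirichletLaplacian_eigen_iff hQsum).mp hφ)
      (restrict_ne_zero hφ0) with h | h
    exacts [Or.inl fun x hx => h ⟨x, hx⟩, Or.inr fun x hx => h ⟨x, hx⟩]
  · obtain ⟨c, hc⟩ := hA.exists_eq_smul_of_mulVec_eq_smul hoff hlam
      ((dirichletLaplacian_eigen_iff hQsum).mp hφ) (restrict_ne_zero hφ0)
      ((dirichletLaplacian_eigen_iff hQsum).mp hψ)
    refine ⟨c, fun x => ?_⟩
    by_cases hx : x ∈ G₁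
    · exact congrFun hc ⟨x, hx⟩
    · rw [hψsupp x hx, hφsupp x hx, mul_zero]

theorem ground_state_positive_and_simple
    {V : Type*} [DecidableEq V]
    (Q : V → V → ℝ)
    (hQsym : ∀ x y, Q x y = Q y x)
    (hQpos : ∀ x y, x ≠ y → 0 < Q x y)
    (hQdiag : ∀ x, Q x x = 0)
    (hQsum : ∀ x, Summable fun y => Q x y)
    (G₁ : Finset V) (hne : G₁.Nonempty) (hproper : ∃ x, x ∉ G₁)
    -- the Dirichlet fractional Laplacian acting on real functions supported in G₁
    (L : (V → ℝ) → V → ℝ)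
    (hL : ∀ u x, L u x = ∑' y, Q x y *
      ((if x ∈ G₁ then u x else 0) - (if y ∈ G₁ then u y else 0)))
    (lam₁ : ℝ)
    -- lam₁ is an eigenvalue of L on G₁ ...
    (hev : ∃ φ : V → ℝ, (∀ x ∉ G₁, φ x = 0) ∧ (∃ x ∈ G₁, φ x ≠ 0) ∧
      ∀ x ∈ G₁, L φ x = lam₁ * φ x)
    -- ... and it is the smallest one
    (hmin : ∀ μ : ℝ, (∃ φ : V → ℝ, (∀ x ∉ G₁, φ x = 0) ∧ (∃ x ∈ G₁, φ x ≠ 0) ∧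
      ∀ x ∈ G₁, L φ x = μ * φ x) → lam₁ ≤ μ) :
    (∀ φ : V → ℝ, (∀ x ∉ G₁, φ x = 0) → (∃ x ∈ G₁, φ x ≠ 0) →
      (∀ x ∈ G₁, L φ x = lam₁ * φ x) →
      (∀ x ∈ G₁, 0 < φ x) ∨ (∀ x ∈ G₁, φ x < 0)) ∧
    (∀ φ ψ : V → ℝ, (∀ x ∉ G₁, φ x = 0) → (∃ x ∈ G₁, φ x ≠ 0) →
      (∀ x ∈ G₁, L φ x = lam₁ * φ x) →
      (∀ x ∉ G₁, ψ x = 0) → (∀ x ∈ G₁, L ψ x = lam₁ * ψ x) →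
      ∃ c : ℝ, ∀ x, ψ x = c * φ x) :=
  ground_state_positive_and_simple_general Q hQsym hQpos hQsum G₁ L hL lam₁ hmin
end
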